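/- arXiv:2203.00539 — 6 statements merged into one kernel-verified Lean document; each statement's English description precedes it below -/
import Mathlib

section
/- The binary relation on orbits of morphisms defined by Gf ⇒ Gf' whenever there exists g in G with gf ⇒ f' is a partial order on the set of morphism-orbits between two object-orbits. -/
/-- A loopfree poset-enriched (LP) category together with an action of a group `G`
by invertible order-preserving functors, satisfying the regularity conditions:
`g • x ≠ y` for every non-identity morphism `f : x → y`, and `g • x = x → g • f = f`. -/
structure LPAction (G : Type*) [Group G] where
  Obj : Type*
  Arr : Type*
  src : Arr → Obj
  tgt : Arr → Obj
  ide : Obj → Arr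
  src_ide : ∀ x, src (ide x) = x
  tgt_ide : ∀ x, tgt (ide x) = x
  /-- the partial order `⇒` on hom-sets (only relates parallel arrows) -/
  Le : Arr → Arr → Prop
  src_le : ∀ {a b}, Le a b → src a = src b
  tgt_le : ∀ {a b}, Le a b → tgt a = tgt b
  le_refl : ∀ a, Le a a
  le_trans : ∀ {a b c}, Le a b → Le b c → Le a c
  le_antisymm : ∀ {a b}, Le a b → Le b a → a = b
  smulObj : G → Obj → Obj
  smulArr : G → Arr → Arr
  one_smulObj : ∀ x, smulObj 1 x = x
  mul_smulObj : ∀ g h x, smulObj (g * h) x = smulObj g (smulObj h x)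
  one_smulArr : ∀ a, smulArr 1 a = a
  mul_smulArr : ∀ g h a, smulArr (g * h) a = smulArr g (smulArr h a)
  src_smul : ∀ g a, src (smulArr g a) = smulObj g (src a)
  tgt_smul : ∀ g a, tgt (smulArr g a) = smulObj g (tgt a)
  smul_ide : ∀ g x, smulArr g (ide x) = ide (smulObj g x)
  smul_le : ∀ (g : G) {a b}, Le a b → Le (smulArr g a) (smulArr g b)
  /-- loopfreeness: the only endomorphisms are identities -/
  loopfree_id : ∀ a, src a = tgt a → a = ide (src a)
  /-- loopfreeness: if hom-sets in both directions are nonempty then the objects coincide -/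
  loopfree : ∀ a b, src a = tgt b → tgt a = src b → src a = tgt a
  /-- regularity axiom (1): `g • x ≠ y` for non-identity `f : x → y` -/
  act1 : ∀ (g : G) a, a ≠ ide (src a) → smulObj g (src a) ≠ tgt a
  /-- regularity axiom (2): if `g` fixes the source of `f` then it fixes `f` -/
  act2 : ∀ (g : G) a, smulObj g (src a) = src a → smulArr g a = a

/-- The binary relation `Gf ⇒ Gf'` iff `∃ g, g•f ⇒ f'` is a partial order on the set of
morphism-orbits between the object-orbits `Gx` and `Gy`: it is reflexive, transitive, and
antisymmetric (i.e. `Gf ⇒ Gf'` and `Gf' ⇒ Gf` force the orbits `Gf` and `Gf'` to coincide). -/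
theorem orbit_rel_partialOrder {G : Type*} [Group G] (C : LPAction G) (x y : C.Obj)
    (R : C.Arr → C.Arr → Prop)
    (hR : ∀ f f', R f f' ↔ ∃ g : G, C.Le (C.smulArr g f) f') :
    (∀ f, (∃ g : G, C.smulObj g x = C.src f) → (∃ g : G, C.smulObj g y = C.tgt f) → R f f) ∧
    (∀ f f', (∃ g : G, C.smulObj g x = C.src f) → (∃ g : G, C.smulObj g y = C.tgt f) →
      R f f' → R f' f → ∃ g : G, C.smulArr g f = f') ∧
    (∀ f f' f'', R f f' → R f' f'' → R f f'') := by
  refine ⟨?_, ?_, ?_⟩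
  · intro f _ _
    exact (hR f f).2 ⟨1, by rw [C.one_smulArr]; exact C.le_refl f⟩
  · intro f f' _ _ h1 h2
    obtain ⟨g, hg⟩ := (hR f f').1 h1
    obtain ⟨h, hh⟩ := (hR f' f).1 h2
    have hk : C.Le (C.smulArr (g * h) f') f' := by
      have := C.le_trans (C.smul_le g hh) hg
      rwa [← C.mul_smulArr] at this
    have hfix : C.smulArr (g * h) f' = f' := by
      apply C.act2
      have := C.src_le hk
      rwa [C.src_smul] at this
    have : C.Le f' (C.smulArr g f) := by
      have := C.smul_le g hh
      rw [← C.mul_smulArr, hfix] at this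
      exact this
    exact ⟨g, C.le_antisymm hg this⟩
  · intro f f' f'' h1 h2
    obtain ⟨g, hg⟩ := (hR f f').1 h1
    obtain ⟨h, hh⟩ := (hR f' f'').1 h2
    refine (hR f f'').2 ⟨h * g, ?_⟩
    rw [C.mul_smulArr]
    exact C.le_trans (C.smul_le h hg) hh
end

section
/- Conjugation by transfer elements lands in the target stabiliser: for a morphism f : y → y' in the quotient category with transfer element σ(f), and any k in the stabiliser of λ(y), the element σ(f)·k·σ(f)⁻¹ lies in the stabiliser of λ(y'). -/
/-- Conjugation by a transfer element lands in the target stabiliser: if `σ` is the transfer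
element of a quotient morphism `f : y → y'`, so that its lift `a = λ(f)` is a morphism
`λ(y) → σ⁻¹·λ(y')` in `C`, then for any `k` stabilising `λ(y)`, the element `σ·k·σ⁻¹`
stabilises `λ(y')`. -/
theorem transfer_conj_mem_stabilizer {G : Type*} [Group G] (C : LPAction G)
    (ly ly' : C.Obj) (σ : G) (a : C.Arr)
    (ha_src : C.src a = ly) (ha_tgt : C.tgt a = C.smulObj σ⁻¹ ly')
    (k : G) (hk : C.smulObj k ly = ly) :
    C.smulObj (σ * k * σ⁻¹) ly' = ly' := by
  have hfix : C.smulArr k a = a := C.act2 k a (by rw [ha_src, hk])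
  have htgt : C.smulObj k (C.smulObj σ⁻¹ ly') = C.smulObj σ⁻¹ ly' := by
    have := congrArg C.tgt hfix
    rwa [C.tgt_smul, ha_tgt] at this
  calc C.smulObj (σ * k * σ⁻¹) ly'
      = C.smulObj σ (C.smulObj k (C.smulObj σ⁻¹ ly')) := by
        rw [C.mul_smulObj, C.mul_smulObj]
    _ = C.smulObj σ (C.smulObj σ⁻¹ ly') := by rw [htgt]
    _ = ly' := by rw [← C.mul_smulObj, mul_inv_cancel, C.one_smulObj]
end

section
/- Composability of coset conditions in the development: given morphisms f₁ : x → y, f₂ : y → z with twisting elements satisfying Φ_z(γ(f₁,f₂))·τ(f₂∘f₁) = τ(f₂)·τ(f₁), and given g₁, g₂, g₃ ∈ G with c_y(g₂) = c_y(g₁·τ(f₁)⁻¹) and c_z(g₃) = c_z(g₂·τ(f₂)⁻¹), then c_z(g₃) = c_z(g₁·τ(f₂∘f₁)⁻¹). -/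
open Pointwise

/-- Composability of coset conditions in the development: given morphisms `f₁ : x → y`,
`f₂ : y → z` with twisting elements `t₁ = τ(f₁)`, `t₂ = τ(f₂)`, `t₂₁ = τ(f₂∘f₁)` satisfying
`Φ_z(γ(f₁,f₂))·τ(f₂∘f₁) = τ(f₂)·τ(f₁)`, and the conjugation relation for `f₂`, if
`c_y(g₂) = c_y(g₁·t₁⁻¹)` and `c_z(g₃) = c_z(g₂·t₂⁻¹)` then `c_z(g₃) = c_z(g₁·t₂₁⁻¹)`,
where `c_w(g)` denotes the left coset `g·Φ_w(F_w)`. -/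
theorem development_coset_composable {G Fx Fy Fz : Type*}
    [Group G] [Group Fx] [Group Fy] [Group Fz]
    (Φx : Fx →* G) (Φy : Fy →* G) (Φz : Fz →* G)
    (hΦx : Function.Injective Φx) (hΦy : Function.Injective Φy)
    (hΦz : Function.Injective Φz)
    (Ff₁ : Fx →* Fy) (Ff₂ : Fy →* Fz)
    (t₁ t₂ t₂₁ : G) (γ : Fz)
    (hconj₁ : ∀ k : Fx, t₁ * Φx k * t₁⁻¹ = Φy (Ff₁ k))
    (hconj₂ : ∀ k : Fy, t₂ * Φy k * t₂⁻¹ = Φz (Ff₂ k))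
    (hco : Φz γ * t₂₁ = t₂ * t₁)
    (g₁ g₂ g₃ : G)
    (h₁ : g₂ • (Set.range Φy) = (g₁ * t₁⁻¹) • (Set.range Φy))
    (h₂ : g₃ • (Set.range Φz) = (g₂ * t₂⁻¹) • (Set.range Φz)) :
    g₃ • (Set.range Φz) = (g₁ * t₂₁⁻¹) • (Set.range Φz) := by
  rw [show Set.range Φy = (Φy.range : Set G) from rfl] at h₁
  rw [show Set.range Φz = (Φz.range : Set G) from rfl] at h₂ ⊢
  rw [leftCoset_eq_iff] at h₁ h₂ ⊢
  obtain ⟨k, hk⟩ := h₁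
  obtain ⟨m, hm⟩ := h₂
  refine ⟨m * Ff₂ k * γ, ?_⟩
  have h3 : t₂ * Φy k = Φz (Ff₂ k) * t₂ := by rw [← hconj₂ k]; group
  have h4 : t₂ * t₁ * t₂₁⁻¹ = Φz γ := by rw [← hco, mul_inv_cancel_right]
  calc Φz (m * Ff₂ k * γ) = Φz m * (Φz (Ff₂ k) * t₂) * t₁ * t₂₁⁻¹ * (t₂ * t₁ * t₂₁⁻¹)⁻¹ * Φz γ := by
        simp only [map_mul]; group
    _ = Φz m * (t₂ * Φy k) * t₁ * t₂₁⁻¹ * (t₂ * t₁ * t₂₁⁻¹)⁻¹ * Φz γ := by rw [h3]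
    _ = Φz m * (t₂ * Φy k) * t₁ * t₂₁⁻¹ * Φz γ⁻¹ * Φz γ := by rw [h4]; simp
    _ = Φz m * (t₂ * Φy k) * t₁ * t₂₁⁻¹ := by simp [mul_assoc]
    _ = g₃⁻¹ * (g₁ * t₂₁⁻¹) := by rw [hm, hk]; group
end

section
/- The lifted matching is a partial matching: if Σ is an acyclic partial matching on the quotient Y = X/G of a regular G-action that is compatible with the associated complex of groups F (in particular F_f is an isomorphism for each f ∈ Σ), then the union of G-orbits of the lifted Σ-morphisms satisfies the partition property: no simplex of X appears in two distinct pairs of the lifted matching. -/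
/-- The lifted matching satisfies the partition property. `X` is a finite simplicial complex
(modelled by its simplices with face relation `face` and dimension `dim`) with a regular
action of the finite group `G`; `Y = X/G` is the orbit quotient; `SigmaY` is an acyclic partial
matching on `Y` compatible with the associated complex of groups (in particular, each
`F_f`, conjugation by the transfer element `σ p`, is an isomorphism of stabilisers,
expressed by surjectivity `hcompat`); `SigmaX` is the union of the `G`-orbits of the chosen
lifts of the `SigmaY`-pairs. Then no simplex of `X` appears in two distinct pairs of `SigmaX`. -/
theorem lifted_matching_partition {G X : Type*} [Group G] [Fintype G] [Fintype X]
    [MulAction G X]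
    (face : X → X → Prop) (dim : X → ℕ)
    (hface_smul : ∀ (g : G) (a b : X), face a b → face (g • a) (g • b))
    (hdim_smul : ∀ (g : G) (a : X), dim (g • a) = dim a)
    (hreg : ∀ (g : G) (a b : X), face a b → g • a = a → g • b = b)
    (SigmaY : Set (Quotient (MulAction.orbitRel G X) × Quotient (MulAction.orbitRel G X)))
    (lift : Quotient (MulAction.orbitRel G X) → X)
    (hlift : ∀ y, Quotient.mk (MulAction.orbitRel G X) (lift y) = y)
    (σ : Quotient (MulAction.orbitRel G X) × Quotient (MulAction.orbitRel G X) → G)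
    (hliftface : ∀ p ∈ SigmaY, face (lift p.1) ((σ p)⁻¹ • lift p.2))
    (hdim : ∀ p ∈ SigmaY, dim (lift p.1) = dim (lift p.2) + 1)
    (hpart : ∀ p ∈ SigmaY, ∀ q ∈ SigmaY, p ≠ q →
      p.1 ≠ q.1 ∧ p.1 ≠ q.2 ∧ p.2 ≠ q.1 ∧ p.2 ≠ q.2)
    (hcompat : ∀ p ∈ SigmaY, ∀ h : G, h • lift p.2 = lift p.2 →
      ∃ k : G, k • lift p.1 = lift p.1 ∧ σ p * k * (σ p)⁻¹ = h)
    (SigmaX : Set (X × X))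
    (hSigmaX : SigmaX = {r | ∃ g : G, ∃ p ∈ SigmaY, r = (g • lift p.1, g • ((σ p)⁻¹ • lift p.2))}) :
    ∀ r ∈ SigmaX, ∀ s ∈ SigmaX, r ≠ s →
      r.1 ≠ s.1 ∧ r.1 ≠ s.2 ∧ r.2 ≠ s.1 ∧ r.2 ≠ s.2 := by
  subst hSigmaX
  rintro r ⟨g, p, hp, rfl⟩ s ⟨h, q, hq, rfl⟩ hne
  have mk_smul : ∀ (g : G) (x : X),
      Quotient.mk (MulAction.orbitRel G X) (g • x) = Quotient.mk (MulAction.orbitRel G X) x :=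
    fun g x => Quotient.sound (MulAction.mem_orbit x g)
  by_cases hpq : p = q
  · subst hpq
    set a := lift p.1 with ha
    set c := lift p.2 with hc
    have fwd : g • a = h • a → g • ((σ p)⁻¹ • c) = h • ((σ p)⁻¹ • c) := by
      intro e
      have hst : (h⁻¹ * g) • a = a := by
        rw [mul_smul, e, ← mul_smul, inv_mul_cancel, one_smul]
      have h1 := hreg (h⁻¹ * g) a ((σ p)⁻¹ • c) (hliftface p hp) hst
      have h2 := congrArg (fun x => h • x) h1
      simpa [smul_smul, mul_assoc] using h2
    have bwd : g • ((σ p)⁻¹ • c) = h • ((σ p)⁻¹ • c) → g • a = h • a := by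
      intro e
      have hst : (h⁻¹ * g) • ((σ p)⁻¹ • c) = (σ p)⁻¹ • c := by
        rw [mul_smul, e, ← mul_smul, inv_mul_cancel, one_smul]
      have hst2 : (σ p * (h⁻¹ * g) * (σ p)⁻¹) • c = c := by
        have := congrArg (fun x => (σ p) • x) hst
        simpa [mul_smul] using this
      obtain ⟨k, hka, hkeq⟩ := hcompat p hp _ hst2
      have hk : k = h⁻¹ * g := by
        have h3 : σ p * k = σ p * (h⁻¹ * g) := mul_right_cancel hkeq
        exact mul_left_cancel h3
      rw [hk] at hka
      have h2 := congrArg (fun x => h • x) hka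
      simpa [smul_smul, mul_assoc] using h2
    have cross1 : g • a ≠ h • ((σ p)⁻¹ • c) := by
      intro e
      have d1 : dim (g • a) = dim c + 1 := by rw [hdim_smul]; exact hdim p hp
      have d2 : dim (h • ((σ p)⁻¹ • c)) = dim c := by rw [hdim_smul, hdim_smul]
      rw [e, d2] at d1; omega
    have cross2 : g • ((σ p)⁻¹ • c) ≠ h • a := by
      intro e
      have d1 : dim (h • a) = dim c + 1 := by rw [hdim_smul]; exact hdim p hp
      have d2 : dim (g • ((σ p)⁻¹ • c)) = dim c := by rw [hdim_smul, hdim_smul]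
      rw [e, d1] at d2; omega
    refine ⟨?_, cross1, cross2, ?_⟩
    · intro e
      exact hne (by simp only [Prod.mk.injEq]; exact ⟨e, fwd e⟩)
    · intro e
      exact hne (by simp only [Prod.mk.injEq]; exact ⟨bwd e, e⟩)
  · obtain ⟨h11, h12, h21, h22⟩ := hpart p hp q hq hpq
    have mka : ∀ (g : G) (y : Quotient (MulAction.orbitRel G X)),
        Quotient.mk (MulAction.orbitRel G X) (g • lift y) = y := by
      intro g y; rw [mk_smul, hlift]
    have mkb : ∀ (g : G) (r : Quotient (MulAction.orbitRel G X) × Quotient (MulAction.orbitRel G X)),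
        Quotient.mk (MulAction.orbitRel G X) (g • ((σ r)⁻¹ • lift r.2)) = r.2 := by
      intro g r; rw [mk_smul, mk_smul, hlift]
    refine ⟨?_, ?_, ?_, ?_⟩
    · intro e
      change g • lift p.1 = h • lift q.1 at e
      exact h11 (by rw [← mka g p.1, ← mka h q.1]; exact congrArg _ e)
    · intro e
      change g • lift p.1 = h • ((σ q)⁻¹ • lift q.2) at e
      exact h12 (by rw [← mka g p.1, ← mkb h q]; exact congrArg _ e)
    · intro e
      change g • ((σ p)⁻¹ • lift p.2) = h • lift q.1 at e
      exact h21 (by rw [← mkb g p, ← mka h q.1]; exact congrArg _ e)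
    · intro e
      change g • ((σ p)⁻¹ • lift p.2) = h • ((σ q)⁻¹ • lift q.2) at e
      exact h22 (by rw [← mkb g p, ← mkb h q]; exact congrArg _ e)
end

section
/- In the quotient LP-category, composition is well-defined on orbits: if f : x → y and f' : y → z are morphisms of C, g, g' ∈ G, and the translates g·f and g'·f' are composable in C, then their composite lies in the orbit G·(f'∘f). -/
/-- A loopfree poset-enriched (LP) category together with an action of a group `G`
by invertible order-preserving functors, satisfying the regularity conditions:
`g • x ≠ y` for every non-identity morphism `f : x → y`, and `g • x = x → g • f = f`. -/
structure LPActionComp (G : Type*) [Group G] where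
  Obj : Type*
  Arr : Type*
  src : Arr → Obj
  tgt : Arr → Obj
  ide : Obj → Arr
  src_ide : ∀ x, src (ide x) = x
  tgt_ide : ∀ x, tgt (ide x) = x
  /-- the partial order `⇒` on hom-sets (only relates parallel arrows) -/
  Le : Arr → Arr → Prop
  src_le : ∀ {a b}, Le a b → src a = src b
  tgt_le : ∀ {a b}, Le a b → tgt a = tgt b
  le_refl : ∀ a, Le a a
  le_trans : ∀ {a b c}, Le a b → Le b c → Le a c
  le_antisymm : ∀ {a b}, Le a b → Le b a → a = b
  smulObj : G → Obj → Obj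
  smulArr : G → Arr → Arr
  one_smulObj : ∀ x, smulObj 1 x = x
  mul_smulObj : ∀ g h x, smulObj (g * h) x = smulObj g (smulObj h x)
  one_smulArr : ∀ a, smulArr 1 a = a
  mul_smulArr : ∀ g h a, smulArr (g * h) a = smulArr g (smulArr h a)
  src_smul : ∀ g a, src (smulArr g a) = smulObj g (src a)
  tgt_smul : ∀ g a, tgt (smulArr g a) = smulObj g (tgt a)
  smul_ide : ∀ g x, smulArr g (ide x) = ide (smulObj g x)
  smul_le : ∀ (g : G) {a b}, Le a b → Le (smulArr g a) (smulArr g b)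
  /-- loopfreeness: the only endomorphisms are identities -/
  loopfree_id : ∀ a, src a = tgt a → a = ide (src a)
  /-- loopfreeness: if hom-sets in both directions are nonempty then the objects coincide -/
  loopfree : ∀ a b, src a = tgt b → tgt a = src b → src a = tgt a
  /-- regularity axiom (1): `g • x ≠ y` for non-identity `f : x → y` -/
  act1 : ∀ (g : G) a, a ≠ ide (src a) → smulObj g (src a) ≠ tgt a
  /-- regularity axiom (2): if `g` fixes the source of `f` then it fixes `f` -/
  act2 : ∀ (g : G) a, smulObj g (src a) = src a → smulArr g a = a
  /-- composition of morphisms (`comp a b` is `b ∘ a`, defined when `tgt a = src b`) -/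
  comp : (a b : Arr) → tgt a = src b → Arr
  src_comp : ∀ a b h, src (comp a b h) = src a
  tgt_comp : ∀ a b h, tgt (comp a b h) = tgt b
  /-- the action is functorial: it commutes with composition -/
  smul_comp : ∀ (g : G) (a b : Arr) (h : tgt a = src b)
    (h' : tgt (smulArr g a) = src (smulArr g b)),
    smulArr g (comp a b h) = comp (smulArr g a) (smulArr g b) h'

/-- Composition in the quotient LP-category is well-defined on orbits: if `f : x → y` and
`f' : y → z` are composable morphisms of `C`, and the translates `g·f` and `g'·f'` are
composable in `C`, then their composite lies in the orbit `G·(f'∘f)`. -/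
theorem quotient_comp_well_defined {G : Type*} [Group G] (C : LPActionComp G)
    (f f' : C.Arr) (h : C.tgt f = C.src f') (g g' : G)
    (h' : C.tgt (C.smulArr g f) = C.src (C.smulArr g' f')) :
    ∃ k : G, C.comp (C.smulArr g f) (C.smulArr g' f') h' = C.smulArr k (C.comp f f' h) := by
  refine ⟨g, ?_⟩
  have hy : C.smulObj g (C.tgt f) = C.smulObj g' (C.src f') := by
    rw [← C.tgt_smul, ← C.src_smul, h']
  have hfix : C.smulObj (g'⁻¹ * g) (C.src f') = C.src f' := by
    rw [C.mul_smulObj, ← h, hy, h, ← C.mul_smulObj, inv_mul_cancel, C.one_smulObj]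
  have hf' : C.smulArr g' f' = C.smulArr g f' := by
    have := C.act2 (g'⁻¹ * g) f' hfix
    calc C.smulArr g' f' = C.smulArr g' (C.smulArr (g'⁻¹ * g) f') := by rw [this]
    _ = C.smulArr g f' := by rw [← C.mul_smulArr, mul_inv_cancel_left]
  rw [C.smul_comp g f f' h (by rw [C.tgt_smul, C.src_smul, h])]
  congr 1
end

section
/- Anti-symmetry in the quotient order forces orbit equality via stabiliser rigidity: if g₀·f ⇒ f' and g₁·f' ⇒ f hold in an LP-category C with a regular G-action (for morphisms f, f' : x → y and g₀, g₁ ∈ G), then f' = g₀·f, so G·f = G·f'. -/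
/-- Anti-symmetry in the quotient order forces orbit equality via stabiliser rigidity:
if `g₀·f ⇒ f'` and `g₁·f' ⇒ f` for parallel morphisms `f, f' : x → y`, then `f' = g₀·f`,
so `G·f = G·f'`. -/
theorem quotient_order_antisymm {G : Type*} [Group G] (C : LPAction G)
    (f f' : C.Arr) (hs : C.src f = C.src f') (ht : C.tgt f = C.tgt f')
    (g₀ g₁ : G) (h₀ : C.Le (C.smulArr g₀ f) f') (h₁ : C.Le (C.smulArr g₁ f') f) :
    f' = C.smulArr g₀ f := by
  have h2 : C.Le (C.smulArr (g₁ * g₀) f) f := by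
    rw [C.mul_smulArr]
    exact C.le_trans (C.smul_le g₁ h₀) h₁
  have hsrc : C.smulObj (g₁ * g₀) (C.src f) = C.src f := by
    have := C.src_le h2
    rwa [C.src_smul] at this
  have hfix : C.smulArr (g₁ * g₀) f = f := C.act2 _ _ hsrc
  have hle : C.Le f (C.smulArr g₁ f') := by
    have := C.smul_le g₁ h₀
    rwa [← C.mul_smulArr, hfix] at this
  have heq : f = C.smulArr g₁ f' := C.le_antisymm hle h₁
  have : C.smulArr g₁ f' = C.smulArr g₁ (C.smulArr g₀ f) := by
    rw [← heq, ← C.mul_smulArr, hfix]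
  have := congrArg (C.smulArr g₁⁻¹) this
  rwa [← C.mul_smulArr, ← C.mul_smulArr, inv_mul_cancel, C.one_smulArr, C.one_smulArr] at this
end
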